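/- Let M, L ∈ ℝ^{d×d} be symmetric invertible matrices with L − M positive semidefinite such that M and L are congruent. Then every f ∈ S(M,L) has exactly one critical point, i.e., there exists a unique z* ∈ ℝ^d with ∇f(z*) = 0. -/

import Mathlib

open Matrix

/-- Gradient of `f : ℝ^ι → ℝ` in coordinates. -/
noncomputable def grad {ι : Type*} [Fintype ι] [DecidableEq ι]
    (f : (ι → ℝ) → ℝ) (z : ι → ℝ) : ι → ℝ :=
  fun i => fderiv ℝ f z (Pi.single i 1)

/-- The class `S(M,L)`. -/
def SClass {ι : Type*} [Fintype ι] [DecidableEq ι]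
    (M L : Matrix ι ι ℝ) (f : (ι → ℝ) → ℝ) : Prop :=
  ContDiff ℝ 1 f ∧ ∀ z₁ z₂ : ι → ℝ,
    (1/2) * ((z₂ - z₁) ⬝ᵥ M.mulVec (z₂ - z₁)) ≤ f z₂ - f z₁ - grad f z₁ ⬝ᵥ (z₂ - z₁) ∧
    f z₂ - f z₁ - grad f z₁ ⬝ᵥ (z₂ - z₁) ≤ (1/2) * ((z₂ - z₁) ⬝ᵥ L.mulVec (z₂ - z₁))

/-- Two real symmetric matrices are congruent if `Tᵀ M T = L` for some invertible `T`. -/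
def MatrixCongruent {d : ℕ} (M L : Matrix (Fin d) (Fin d) ℝ) : Prop :=
  ∃ T : Matrix (Fin d) (Fin d) ℝ, IsUnit T ∧ Tᵀ * M * T = L

/-
Since `M` and `L` are congruent they have the same inertia, so together with `M ≤ L` this gives a
splitting `ℝ^d = X ⊕ Y` such that `M` is uniformly positive on `X` and `L` is uniformly negative
on `Y`. Adding the lower bounds of `f` along `a ∈ X` to the upper bounds along `b ∈ Y`, at four
suitable points, gives `⟪∇f (z + a + b) - ∇f z, a - b⟫ ≥ aᵀ M a - bᵀ L b ≥ μ (‖a‖² + ‖b‖²)`: after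
composing with the reflection `a + b ↦ a - b`, the gradient becomes strongly monotone. The same
four-point inequality makes `∇f` Lipschitz, so a small step along the reflected gradient is a
contraction, and its fixed point is the unique critical point of `f`.
-/

open WithLp
open scoped RealInnerProductSpace

section InnerProductSpace

variable {E : Type*} [NormedAddCommGroup E] [InnerProductSpace ℝ E]

theorem existsUnique_eq_zero_of_strongly_monotone [CompleteSpace E] {G : E → E} {K : NNReal}
    (hG : LipschitzWith K G) {μ : ℝ} (hμ : 0 < μ)
    (hmono : ∀ x y, μ * ‖x - y‖ ^ 2 ≤ ⟪G x - G y, x - y⟫) : ∃! z, G z = 0 := by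
  -- For this step size, `‖Δ - γ (G x - G y)‖² ≤ (1 - 2γμ + γ²K²) ‖Δ‖² ≤ (1 - γμ/2)² ‖Δ‖²`.
  set γ := μ / (K ^ 2 + μ ^ 2)
  have hγ : 0 < γ := by positivity
  have hγK : γ * K ^ 2 ≤ μ := by
    rw [div_mul_eq_mul_div, div_le_iff₀ (by positivity)]
    nlinarith [pow_pos hμ 3]
  have hγμ : γ * μ ≤ 1 := by
    rw [div_mul_eq_mul_div, div_le_one (by positivity)]
    nlinarith [sq_nonneg (K : ℝ)]
  have hk : 0 ≤ 1 - γ * μ / 2 := by linarith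
  have hcontr : ∀ x y, ‖(x - γ • G x) - (y - γ • G y)‖ ≤ (1 - γ * μ / 2) * ‖x - y‖ := by
    intro x y
    refine (pow_le_pow_iff_left₀ (norm_nonneg _) (by positivity) two_ne_zero).1 ?_
    rw [show (x - γ • G x) - (y - γ • G y) = (x - y) - γ • (G x - G y) by module,
      norm_sub_sq_real, real_inner_smul_right, norm_smul, mul_pow, real_inner_comm,
      Real.norm_of_nonneg hγ.le]
    have h1 := hmono x y
    have h2 : ‖G x - G y‖ ^ 2 ≤ K ^ 2 * ‖x - y‖ ^ 2 := by
      rw [← mul_pow]; gcongr; exact hG.norm_sub_le x y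
    nlinarith [mul_le_mul_of_nonneg_left h2 (sq_nonneg γ), mul_le_mul_of_nonneg_left h1 hγ.le,
      mul_le_mul_of_nonneg_right hγK (mul_nonneg hγ.le (sq_nonneg ‖x - y‖)),
      mul_nonneg (sq_nonneg (γ * μ)) (sq_nonneg ‖x - y‖)]
  have hT : ContractingWith (1 - γ * μ / 2).toNNReal fun x => x - γ • G x :=
    ⟨Real.toNNReal_lt_one.2 (by linarith [mul_pos hγ hμ]),
      LipschitzWith.of_dist_le_mul fun x y => by
        simpa [dist_eq_norm, Real.coe_toNNReal _ hk] using hcontr x y⟩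
  obtain ⟨z, hz⟩ : ∃ z, G z = 0 :=
    ⟨_, by simpa [Function.IsFixedPt, hγ.ne'] using hT.fixedPoint_isFixedPt⟩
  refine ⟨z, hz, fun y hy => ?_⟩
  have h := hmono y z
  rw [hy, hz, sub_self, inner_zero_left] at h
  have : ‖y - z‖ ^ 2 ≤ 0 := by nlinarith
  simpa [sub_eq_zero] using this

theorem existsUnique_eq_zero_of_isCompl [FiniteDimensional ℝ E] {X Y : Submodule ℝ E}
    (hXY : IsCompl X Y) {G : E → E} {K : NNReal} (hG : LipschitzWith K G) {μ : ℝ} (hμ : 0 < μ)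
    (hmono : ∀ z, ∀ a ∈ X, ∀ b ∈ Y, μ * (‖a‖ ^ 2 + ‖b‖ ^ 2) ≤ ⟪G (z + (a + b)) - G z, a - b⟫) :
    ∃! z, G z = 0 := by
  have : CompleteSpace E := FiniteDimensional.complete ℝ E
  let R : E →L[ℝ] E :=
    LinearMap.toContinuousLinearMap (X.projection Y hXY - Y.projection X hXY.symm)
  have hR : ∀ a ∈ X, ∀ b ∈ Y, R (a + b) = a - b := by
    intro a ha b hb
    simp [R, Submodule.projection_apply_of_mem_left, (Submodule.projection_apply_eq_zero_iff _).2,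
      ha, hb]
  have hRR : ∀ v, R (R v) = v := fun v => by
    have ha := Submodule.projection_apply_mem hXY v
    have hb := Submodule.projection_apply_mem hXY.symm v
    rw [← Submodule.projection_add_projection_eq_self hXY v, hR _ ha _ hb, sub_eq_add_neg,
      hR _ ha _ (Y.neg_mem hb), sub_neg_eq_add]
  have hRadj : ∀ w, R.adjoint (R.adjoint w) = w := fun w => ext_inner_left ℝ fun v => by
    rw [ContinuousLinearMap.adjoint_inner_right, ContinuousLinearMap.adjoint_inner_right, hRR]
  have hmono' : ∀ x y, μ / 2 * ‖x - y‖ ^ 2 ≤ ⟪R.adjoint (G x) - R.adjoint (G y), x - y⟫ := by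
    intro x y
    obtain ⟨a, ha, b, hb, hab⟩ : ∃ a ∈ X, ∃ b ∈ Y, a + b = x - y :=
      ⟨_, Submodule.projection_apply_mem hXY _, _, Submodule.projection_apply_mem hXY.symm _,
        Submodule.projection_add_projection_eq_self hXY _⟩
    have h := hmono y a ha b hb
    rw [hab, add_sub_cancel] at h
    rw [← map_sub, ContinuousLinearMap.adjoint_inner_left, ← hab, hR a ha b hb]
    nlinarith [norm_add_sq_real a b, norm_sub_sq_real a b, sq_nonneg ‖a - b‖]
  have key := existsUnique_eq_zero_of_strongly_monotone (G := fun x => R.adjoint (G x))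
    (R.adjoint.lipschitz.comp hG) (half_pos hμ) hmono'
  simpa [map_eq_zero_iff _ (Function.LeftInverse.injective hRadj)] using key

theorem norm_le_of_forall_two_inner_sub_le (P : E →L[ℝ] E) {u v : E}
    (h : ∀ y, 2 * ⟪u, y⟫ - ⟪y, P y⟫ ≤ ⟪u, v⟫) : ‖u‖ ≤ (‖P‖ + 1) * ‖v‖ := by
  set s := ‖P‖ + 1
  have hs : 0 < s := by positivity
  have hy := h (s⁻¹ • u)
  rw [real_inner_smul_right, map_smul, real_inner_smul_left, real_inner_smul_right] at hy
  have hPu : ⟪u, P u⟫ ≤ (s - 1) * ‖u‖ ^ 2 := by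
    calc ⟪u, P u⟫ ≤ ‖u‖ * ‖P u‖ := real_inner_le_norm _ _
      _ ≤ ‖u‖ * (‖P‖ * ‖u‖) := by gcongr; exact P.le_opNorm u
      _ = (s - 1) * ‖u‖ ^ 2 := by ring
  have huv := real_inner_le_norm u v
  rw [real_inner_self_eq_norm_sq] at hy
  have : s * ‖u‖ ^ 2 ≤ s ^ 2 * (‖u‖ * ‖v‖) := by
    field_simp at hy
    nlinarith
  rcases (norm_nonneg u).eq_or_lt with hu | hu
  · rw [← hu]; positivity
  · exact le_of_mul_le_mul_left (a := s * ‖u‖) (by nlinarith) (mul_pos hs hu)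

end InnerProductSpace

section LinearAlgebra

variable {ι : Type*} [Fintype ι]

theorem Matrix.dotProduct_mulVec_conj (T A : Matrix ι ι ℝ) (x : ι → ℝ) :
    T *ᵥ x ⬝ᵥ A *ᵥ (T *ᵥ x) = x ⬝ᵥ (Tᵀ * A * T) *ᵥ x := by
  rw [← mulVec_mulVec, ← mulVec_mulVec, dotProduct_mulVec x, vecMul_transpose]

variable [DecidableEq ι]

theorem Matrix.IsHermitian.exists_isCompl_pos_neg {A : Matrix ι ι ℝ} (hA : A.IsHermitian)
    (hA₀ : IsUnit A) :
    ∃ P N : Submodule ℝ (EuclideanSpace ℝ ι), IsCompl P N ∧ ∃ μ > 0,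
      (∀ x ∈ P, μ * ‖x‖ ^ 2 ≤ x ⬝ᵥ A *ᵥ x) ∧ ∀ x ∈ N, x ⬝ᵥ A *ᵥ x ≤ -(μ * ‖x‖ ^ 2) := by
  set b := hA.eigenvectorBasis
  set ev := hA.eigenvalues
  have hev : ∀ i, ev i ≠ 0 := fun i h0 =>
    b.orthonormal.ne_zero i <| WithLp.ofLp_injective 2 <| mulVec_injective_iff_isUnit.2 hA₀ <| by
      simp [b, hA.mulVec_eigenvectorBasis, show hA.eigenvalues i = 0 from h0]
  obtain ⟨μ, hμ, hμev⟩ : ∃ μ > 0, ∀ i, μ ≤ |ev i| := by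
    rcases isEmpty_or_nonempty ι with hι | hι
    · exact ⟨1, one_pos, fun i => isEmptyElim i⟩
    · obtain ⟨i₀, hi₀⟩ := Finite.exists_min fun i => |ev i|
      exact ⟨|ev i₀|, abs_pos.2 (hev i₀), hi₀⟩
  have hAb : ∀ i, toEuclideanLin A (b i) = ev i • b i := fun i =>
    WithLp.ofLp_injective 2 (hA.mulVec_eigenvectorBasis i)
  have hquad : ∀ x : EuclideanSpace ℝ ι, x ⬝ᵥ A *ᵥ x = ∑ i, ev i * ⟪b i, x⟫ ^ 2 := by
    intro x
    rw [← inner_toEuclideanCLM, ← b.sum_inner_mul_inner]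
    refine Finset.sum_congr rfl fun i _ => ?_
    change ⟪x, b i⟫ * ⟪b i, toEuclideanLin A x⟫ = _
    rw [← isSymmetric_toEuclideanLin_iff.mpr hA, hAb, real_inner_smul_left, real_inner_comm]
    ring
  have hnorm : ∀ x : EuclideanSpace ℝ ι, ‖x‖ ^ 2 = ∑ i, ⟪b i, x⟫ ^ 2 := fun x => by
    simp [← b.sum_sq_norm_inner_right x]
  have hcoord : ∀ (S : Set ι), ∀ x ∈ Submodule.span ℝ (b '' S), ∀ i ∉ S, ⟪b i, x⟫ = 0 := by
    intro S x hx i hi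
    rw [← b.coe_toBasis, b.toBasis.mem_span_image] at hx
    by_contra h
    exact hi (hx (by simpa [b.coe_toBasis_repr_apply, b.repr_apply_apply] using h))
  refine ⟨_, _, b.toBasis.linearIndependent.isCompl_span_image b.toBasis.span_eq
    (isCompl_compl (x := {i | 0 < ev i})), μ, hμ, fun x hx => ?_, fun x hx => ?_⟩
  · rw [hquad, hnorm, Finset.mul_sum]
    refine Finset.sum_le_sum fun i _ => ?_
    by_cases hi : 0 < ev i
    · have : μ ≤ ev i := (hμev i).trans_eq (abs_of_pos hi)
      gcongr
    · simp [hcoord _ x hx i hi]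
  · rw [hquad, hnorm, Finset.mul_sum, ← Finset.sum_neg_distrib]
    refine Finset.sum_le_sum fun i _ => ?_
    by_cases hi : 0 < ev i
    · simp [hcoord _ x hx i (by simpa using hi)]
    · have : μ ≤ -ev i := (hμev i).trans_eq (abs_of_neg (lt_of_le_of_ne (not_lt.1 hi) (hev i)))
      nlinarith [sq_nonneg ⟪b i, x⟫]

theorem exists_isCompl_pos_neg_of_congruent {M L T : Matrix ι ι ℝ} (hM : M.IsSymm)
    (hM₀ : IsUnit M) (hT : IsUnit T) (hTML : Tᵀ * M * T = L) (hLM : (L - M).PosSemidef) :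
    ∃ X Y : Submodule ℝ (EuclideanSpace ℝ ι), IsCompl X Y ∧ ∃ μ > 0,
      (∀ x ∈ X, μ * ‖x‖ ^ 2 ≤ x ⬝ᵥ M *ᵥ x) ∧ ∀ y ∈ Y, y ⬝ᵥ L *ᵥ y ≤ -(μ * ‖y‖ ^ 2) := by
  have hM' : M.IsHermitian := isHermitian_iff_isSymm.2 hM
  have hL : L.IsHermitian := hTML ▸ by
    simpa [conjTranspose_eq_transpose_of_trivial] using isHermitian_conjTranspose_mul_mul T hM'
  have hL₀ : IsUnit L := hTML ▸ (((isUnit_transpose T).2 hT).mul hM₀).mul hT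
  obtain ⟨PM, NM, hPNM, μM, hμM, hPM, hNM⟩ := hM'.exists_isCompl_pos_neg hM₀
  obtain ⟨PL, NL, hPNL, μL, hμL, hPL, hNL⟩ := hL.exists_isCompl_pos_neg hL₀
  have hTinj : Function.Injective (toEuclideanLin T) :=
    (toLp_injective 2).comp <| (mulVec_injective_iff_isUnit.2 hT).comp (ofLp_injective 2)
  -- `T` maps the `L`-positive space to an `M`-positive one (Sylvester's law of inertia).
  have hdisj : Disjoint (PL.map (toEuclideanLin T)) NM := by
    rw [Submodule.disjoint_def]
    rintro _ ⟨x, hx, rfl⟩ hxN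
    have hpos := hPL x hx
    have hneg := hNM _ hxN
    simp only [toLpLin_apply, ofLp_toLp, dotProduct_mulVec_conj, hTML] at hneg
    have : ‖x‖ ^ 2 ≤ 0 := by nlinarith [sq_nonneg ‖toLp 2 (T *ᵥ ofLp x)‖]
    rw [show x = 0 by simpa using this, map_zero]
  have hdim := Submodule.finrank_add_finrank_le_of_disjoint hdisj
  rw [← (Submodule.equivMapOfInjective _ hTinj PL).finrank_eq] at hdim
  have hdimM := Submodule.finrank_add_eq_of_isCompl hPNM
  have hdimL := Submodule.finrank_add_eq_of_isCompl hPNL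
  refine ⟨PM, NL, (Submodule.isCompl_iff_disjoint _ _ (by omega)).2 ?_, min μM μL,
    lt_min hμM hμL, fun x hx => ?_, fun y hy => ?_⟩
  · rw [Submodule.disjoint_def]
    intro x hxM hxL
    have hx := hLM.dotProduct_mulVec_nonneg x
    simp only [star_trivial, sub_mulVec, dotProduct_sub] at hx
    have : ‖x‖ ^ 2 ≤ 0 := by nlinarith [hPM x hxM, hNL x hxL]
    simpa using this
  · nlinarith [hPM x hx, min_le_left μM μL, sq_nonneg ‖x‖]
  · nlinarith [hNL y hy, min_le_right μM μL, sq_nonneg ‖y‖]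

end LinearAlgebra

section SClass

open scoped Matrix.Norms.L2Operator

variable {ι : Type*} [Fintype ι] [DecidableEq ι] {M L : Matrix ι ι ℝ} {f : (ι → ℝ) → ℝ}

noncomputable def euclideanGrad (f : (ι → ℝ) → ℝ) (z : EuclideanSpace ℝ ι) :
    EuclideanSpace ℝ ι :=
  toLp 2 (grad f z)

theorem SClass.dotProduct_mulVec_sub_dotProduct_mulVec_le (hf : SClass M L f) (z a b : ι → ℝ) :
    a ⬝ᵥ M *ᵥ a - b ⬝ᵥ L *ᵥ b ≤ (grad f (z + (a + b)) - grad f z) ⬝ᵥ (a - b) := by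
  have h₁ := (hf.2 (z + (a + b)) (z + b)).1
  have h₂ := (hf.2 z (z + a)).1
  have h₃ := (hf.2 z (z + b)).2
  have h₄ := (hf.2 (z + (a + b)) (z + a)).2
  simp only [show z + b - (z + (a + b)) = -a by abel, show z + a - (z + (a + b)) = -b by abel,
    add_sub_cancel_left, mulVec_neg, neg_dotProduct, dotProduct_neg, neg_neg] at h₁ h₂ h₃ h₄
  simp only [sub_dotProduct, dotProduct_sub]
  linarith

-- Cocoercivity of the gradient of the convex function `f - ½ zᵀ M z`, whose Hessian is at most
-- `L - M`.
theorem SClass.two_mul_dotProduct_sub_le (hM : M.IsSymm) (hf : SClass M L f) (z Δ y : ι → ℝ) :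
    2 * ((grad f (z + Δ) - grad f z - M *ᵥ Δ) ⬝ᵥ y) - y ⬝ᵥ (L - M) *ᵥ y ≤
      (grad f (z + Δ) - grad f z - M *ᵥ Δ) ⬝ᵥ Δ := by
  have h := hf.dotProduct_mulVec_sub_dotProduct_mulVec_le z (Δ - y) y
  rw [sub_add_cancel] at h
  have hsymm : Δ ⬝ᵥ M *ᵥ y = y ⬝ᵥ M *ᵥ Δ := by
    rw [dotProduct_mulVec, ← mulVec_transpose, hM.eq, dotProduct_comm]
  simp only [sub_mulVec, mulVec_sub, sub_dotProduct, dotProduct_sub] at h ⊢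
  linarith [dotProduct_comm (M *ᵥ Δ) y, dotProduct_comm (M *ᵥ Δ) Δ]

theorem SClass.lipschitzWith_euclideanGrad (hM : M.IsSymm) (hf : SClass M L f) :
    LipschitzWith (‖L - M‖₊ + 1 + ‖M‖₊) (euclideanGrad f) := by
  refine LipschitzWith.of_dist_le_mul fun x y => ?_
  set u := euclideanGrad f x - euclideanGrad f y - toEuclideanCLM (𝕜 := ℝ) M (x - y)
  have hu : ‖u‖ ≤ (‖L - M‖ + 1) * ‖x - y‖ :=
    norm_le_of_forall_two_inner_sub_le (toEuclideanCLM (𝕜 := ℝ) (L - M)) fun v => by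
      have h := hf.two_mul_dotProduct_sub_le hM (ofLp y) (ofLp (x - y)) (ofLp v)
      rw [← ofLp_add, add_sub_cancel] at h
      simpa [u, euclideanGrad, inner_toEuclideanCLM, EuclideanSpace.inner_eq_star_dotProduct,
        dotProduct_comm, mulVec_sub, sub_mulVec, dotProduct_sub] using h
  rw [dist_eq_norm, dist_eq_norm]
  push_cast
  calc ‖euclideanGrad f x - euclideanGrad f y‖ = ‖u + toEuclideanCLM (𝕜 := ℝ) M (x - y)‖ := by
        rw [sub_add_cancel]
    _ ≤ ‖u‖ + ‖M‖ * ‖x - y‖ := norm_add_le_of_le le_rfl (l2_opNorm_mulVec M (x - y))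
    _ ≤ (‖L - M‖ + 1 + ‖M‖) * ‖x - y‖ := by linear_combination hu

end SClass

theorem stmt_11 {d : ℕ} (M L : Matrix (Fin d) (Fin d) ℝ)
    (hM : M.IsSymm) (hMinv : IsUnit M)
    (hLM : (L - M).PosSemidef) (hcong : MatrixCongruent M L) :
    ∀ f : (Fin d → ℝ) → ℝ, SClass M L f → ∃! z : Fin d → ℝ, grad f z = 0 := by
  intro f hf
  obtain ⟨T, hT, hTML⟩ := hcong
  obtain ⟨X, Y, hXY, μ, hμ, hX, hY⟩ := exists_isCompl_pos_neg_of_congruent hM hMinv hT hTML hLM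
  have hmono : ∀ z, ∀ a ∈ X, ∀ b ∈ Y,
      μ * (‖a‖ ^ 2 + ‖b‖ ^ 2) ≤ ⟪euclideanGrad f (z + (a + b)) - euclideanGrad f z, a - b⟫ :=
    fun z a ha b hb => by
      refine le_trans ?_ ((hf.dotProduct_mulVec_sub_dotProduct_mulVec_le z a b).trans_eq ?_)
      · linarith [hX a ha, hY b hb]
      · simp [euclideanGrad, EuclideanSpace.inner_eq_star_dotProduct, dotProduct_comm]
  obtain ⟨z, hz, huniq⟩ :=
    existsUnique_eq_zero_of_isCompl hXY (hf.lipschitzWith_euclideanGrad hM) hμ hmono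
  refine ⟨ofLp z, congrArg ofLp hz, fun y hy => ?_⟩
  rw [← huniq (toLp 2 y) (by simp [euclideanGrad, hy])]
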